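/- Let n ≥ 1, s > 0 and C₀ > 0. Let k : ℝⁿ → ℂ be a measurable function satisfying |k(x)| ≤ C₀ s^{−n/2} (s^{−1/2}|x|)^{−n−1} for all x with |x| ≥ s^{1/2}. Then there exists a constant C, depending only on n and C₀, such that for all Borel sets E, Ẽ ⊆ ℝⁿ with dist(E,Ẽ) ≥ s^{1/2} and all f ∈ L²(ℝⁿ): ess sup_{x ∈ E} | ∫_{ℝⁿ} k(x−y) 1_Ẽ(y) f(y) dy | ≤ C s^{−n/4} (s^{−1/2} dist(E,Ẽ))^{−n/2−1} ‖f‖_{L²(ℝⁿ)}. (That is, the pointwise kernel decay implies L²–L^∞ off-diagonal estimates.) -/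

import Mathlib

open MeasureTheory Real ENNReal
open scoped ENNReal NNReal FourierTransform RealInnerProductSpace

noncomputable section

/-- `ℝⁿ` with the Euclidean norm. -/
abbrev Rn (n : ℕ) := EuclideanSpace ℝ (Fin n)
/-- `ℂⁿ` with the Euclidean norm. -/
abbrev Cn (n : ℕ) := EuclideanSpace ℂ (Fin n)
/-- `ℂⁿ ⊗ ℂⁿ` (i.e. `n × n` complex matrices) with the Frobenius norm. -/
abbrev Mn (n : ℕ) := EuclideanSpace ℂ (Fin n × Fin n)

instance (n : ℕ) : MeasurableSpace (Cn n) := borel _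
instance (n : ℕ) : BorelSpace (Cn n) := ⟨rfl⟩
instance (n : ℕ) : MeasurableSpace (Mn n) := borel _
instance (n : ℕ) : BorelSpace (Mn n) := ⟨rfl⟩

/-- The (extended real valued) distance between two sets. -/
def setEDist {X : Type*} [PseudoEMetricSpace X] (E F : Set X) : ℝ≥0∞ :=
  ⨅ (x ∈ E) (y ∈ F), edist x y

/-! For `x ∈ E`, every `y ∈ E'` satisfies `‖x - y‖ ≥ d := dist(E, E') ≥ √s`, so by Cauchy–Schwarz
the integral is at most `‖f‖₂` times the `L²` norm of `k` outside the ball of radius `d`. There the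
decay hypothesis reads `|k z| ≤ C₀ √s ‖z‖^{-(n+1)}`, and the substitution `z = d • w` gives
`∫_{‖z‖ ≥ d} ‖z‖^{-2n-2} = d^{-n-2} ∫_{‖w‖ ≥ 1} ‖w‖^{-2n-2}`, a finite constant times `d^{-n-2}`
because `2n + 2 > n`. -/

open Module (finrank)

lemma eLpNorm_indicator_comp_sub_le {G F : Type*} [NormedAddCommGroup G] [MeasurableSpace G]
    [MeasurableAdd G] [MeasurableNeg G] [NormedAddCommGroup F] (ν : Measure G) [ν.IsNegInvariant]
    [ν.IsAddLeftInvariant] {k : G → F} (hk : AEStronglyMeasurable k ν) {S E' : Set G}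
    (hS : MeasurableSet S) {x : G} (hx : ∀ y ∈ E', x - y ∈ S) (p : ℝ≥0∞) :
    eLpNorm (E'.indicator fun y => k (x - y)) p ν ≤ eLpNorm k p (ν.restrict S) := by
  calc eLpNorm (E'.indicator fun y => k (x - y)) p ν
      ≤ eLpNorm (S.indicator k ∘ fun y => x - y) p ν := by
        refine eLpNorm_mono fun y => ?_
        by_cases hy : y ∈ E'
        · simp [hy, hx y hy]
        · simp [hy]
    _ = eLpNorm k p (ν.restrict S) := by
        rw [eLpNorm_comp_measurePreserving (hk.indicator hS) (ν.measurePreserving_sub_left x),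
          eLpNorm_indicator_eq_eLpNorm_restrict hS]

lemma norm_integral_mul_le_of_eLpNorm_le {α 𝕜 : Type*} [MeasurableSpace α] {ν : Measure α}
    [RCLike 𝕜] {g f : α → 𝕜} (hg : AEStronglyMeasurable g ν) (hf : MemLp f 2 ν) {B : ℝ}
    (hB : 0 ≤ B) (hgB : eLpNorm g 2 ν ≤ ENNReal.ofReal B) :
    ‖∫ y, g y * f y ∂ν‖ ≤ B * (eLpNorm f 2 ν).toReal := by
  have hHolder : eLpNorm (fun y => g y * f y) 1 ν ≤ eLpNorm g 2 ν * eLpNorm f 2 ν := by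
    simpa using eLpNorm_le_eLpNorm_mul_eLpNorm_of_nnnorm hg hf.1 (· * ·) 1
      (ae_of_all _ fun y => by simp)
  have hbound : ‖∫ y, g y * f y ∂ν‖ₑ ≤ ENNReal.ofReal B * eLpNorm f 2 ν :=
    calc ‖∫ y, g y * f y ∂ν‖ₑ ≤ eLpNorm (fun y => g y * f y) 1 ν := by
          rw [eLpNorm_one_eq_lintegral_enorm]; exact enorm_integral_le_lintegral_enorm _
      _ ≤ ENNReal.ofReal B * eLpNorm f 2 ν := hHolder.trans (mul_le_mul_left hgB _)
  rw [← toReal_ofReal hB, ← toReal_mul, ← toReal_enorm]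
  exact toReal_mono (mul_ne_top ofReal_ne_top hf.eLpNorm_ne_top) hbound

lemma sq_eLpNorm_two {α F : Type*} [MeasurableSpace α] [NormedAddCommGroup F] (ν : Measure α)
    (k : α → F) : eLpNorm k 2 ν ^ 2 = ∫⁻ z, ‖k z‖ₑ ^ 2 ∂ν := by
  simpa using eLpNorm_nnreal_pow_eq_lintegral (f := k) (μ := ν) (p := 2) two_ne_zero

lemma setEDist_le_edist {X : Type*} [PseudoEMetricSpace X] {E F : Set X} {x y : X} (hx : x ∈ E)
    (hy : y ∈ F) : setEDist E F ≤ edist x y :=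
  (iInf₂_le x hx).trans (iInf₂_le y hy)

lemma toReal_setEDist_le_dist {X : Type*} [PseudoMetricSpace X] {E F : Set X} {x y : X}
    (hx : x ∈ E) (hy : y ∈ F) : (setEDist E F).toReal ≤ dist x y :=
  toReal_le_of_le_ofReal dist_nonneg ((setEDist_le_edist hx hy).trans_eq (edist_dist x y))

lemma le_toReal_setEDist {X : Type*} [PseudoMetricSpace X] {E F : Set X} {x y : X} (hx : x ∈ E)
    (hy : y ∈ F) {a : ℝ} (h : ENNReal.ofReal a ≤ setEDist E F) : a ≤ (setEDist E F).toReal :=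
  (ofReal_le_iff_le_toReal (ne_top_of_le_ne_top (edist_ne_top x y) (setEDist_le_edist hx hy))).1 h

lemma rpow_mul_inv_sqrt_mul_rpow {s r a b : ℝ} (hs : 0 < s) (hr : 0 ≤ r) (h : b - a / 2 = 1 / 2) :
    s ^ b * ((√s)⁻¹ * r) ^ a = √s * r ^ a := by
  rw [mul_rpow (by positivity) hr, sqrt_eq_rpow, ← Real.rpow_neg_one, ← rpow_mul hs.le,
    ← rpow_mul hs.le, ← mul_assoc, ← rpow_add hs]
  congr 2
  linarith

def normRpowTail {E : Type*} [NormedAddCommGroup E] [MeasurableSpace E]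
    (μ : Measure E) (p : ℝ) : ℝ≥0∞ :=
  ∫⁻ z in {z : E | 1 ≤ ‖z‖}, ENNReal.ofReal (‖z‖ ^ (-p)) ∂μ

section Tail

variable {E : Type*} [NormedAddCommGroup E] [NormedSpace ℝ E] [FiniteDimensional ℝ E]
  [MeasurableSpace E] [BorelSpace E] (μ : Measure E) [μ.IsAddHaarMeasure]

lemma lintegral_comp_inv_smul_addHaar (g : E → ℝ≥0∞) {r : ℝ} (hr : 0 < r) :
    ∫⁻ z, g (r⁻¹ • z) ∂μ = ENNReal.ofReal (r ^ finrank ℝ E) * ∫⁻ z, g z ∂μ := by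
  have hmap := lintegral_map_equiv (μ := μ) g (MeasurableEquiv.smul₀ r⁻¹ (inv_ne_zero hr.ne'))
  rw [MeasurableEquiv.coe_smul₀, Measure.map_addHaar_smul μ (inv_ne_zero hr.ne'),
    lintegral_smul_measure] at hmap
  rw [← hmap, ← inv_pow, inv_inv, abs_of_pos (by positivity), smul_eq_mul]

lemma setLIntegral_norm_rpow_neg_eq_mul_normRpowTail {d : ℝ} (hd : 0 < d) (p : ℝ) :
    ∫⁻ z in {z : E | d ≤ ‖z‖}, ENNReal.ofReal (‖z‖ ^ (-p)) ∂μ =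
      ENNReal.ofReal (d ^ ((finrank ℝ E : ℝ) - p)) * normRpowTail μ p := by
  have hS : ∀ r : ℝ, MeasurableSet {z : E | r ≤ ‖z‖} := fun r =>
    measurableSet_le measurable_const measurable_norm
  have hscale : ∀ z : E, {z : E | d ≤ ‖z‖}.indicator (fun z => ENNReal.ofReal (‖z‖ ^ (-p))) z =
      ENNReal.ofReal (d ^ (-p)) *
        {z : E | 1 ≤ ‖z‖}.indicator (fun z => ENNReal.ofReal (‖z‖ ^ (-p))) (d⁻¹ • z) := by
    intro z
    have hnorm : ‖d⁻¹ • z‖ = d⁻¹ * ‖z‖ := by rw [norm_smul, norm_inv, norm_of_nonneg hd.le]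
    simp only [Set.indicator_apply, Set.mem_ofPred_eq, hnorm, le_inv_mul_iff₀ hd, mul_one]
    split_ifs
    · rw [← ENNReal.ofReal_mul (by positivity), ← mul_rpow (by positivity) (by positivity),
        mul_inv_cancel_left₀ hd.ne']
    · rw [mul_zero]
  rw [← lintegral_indicator (hS d), lintegral_congr hscale, lintegral_const_mul' _ _ ofReal_ne_top,
    lintegral_comp_inv_smul_addHaar μ _ hd, lintegral_indicator (hS 1), normRpowTail, ← mul_assoc,
    ← ENNReal.ofReal_mul (by positivity), mul_comm (d ^ (-p)), ← Real.rpow_natCast,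
    ← rpow_add hd, ← sub_eq_add_neg]

lemma normRpowTail_lt_top {p : ℝ} (hp : finrank ℝ E < p) : normRpowTail μ p < ∞ := by
  have hbound : ∀ z ∈ {z : E | 1 ≤ ‖z‖},
      ENNReal.ofReal (‖z‖ ^ (-p)) ≤ ENNReal.ofReal (2 ^ p) * ENNReal.ofReal ((1 + ‖z‖) ^ (-p)) := by
    intro z (hz : 1 ≤ ‖z‖)
    rw [← ENNReal.ofReal_mul (by positivity)]
    refine ENNReal.ofReal_le_ofReal ?_
    have hp0 : 0 ≤ p := (Nat.cast_nonneg _).trans hp.le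
    calc ‖z‖ ^ (-p) = 2 ^ p * (2 * ‖z‖) ^ (-p) := by
          rw [mul_rpow zero_le_two (by positivity), rpow_neg zero_le_two,
            mul_inv_cancel_left₀ (by positivity)]
      _ ≤ 2 ^ p * (1 + ‖z‖) ^ (-p) := by
          gcongr 2 ^ p * ?_
          exact rpow_le_rpow_of_nonpos (by positivity) (by linarith) (by linarith)
  calc normRpowTail μ p
      ≤ ∫⁻ z in {z : E | 1 ≤ ‖z‖}, ENNReal.ofReal (2 ^ p) * ENNReal.ofReal ((1 + ‖z‖) ^ (-p)) ∂μ :=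
        setLIntegral_mono' (measurableSet_le measurable_const measurable_norm) hbound
    _ ≤ ∫⁻ z, ENNReal.ofReal (2 ^ p) * ENNReal.ofReal ((1 + ‖z‖) ^ (-p)) ∂μ :=
        setLIntegral_le_lintegral _ _
    _ < ∞ := by
        rw [lintegral_const_mul' _ _ ofReal_ne_top]
        exact ENNReal.mul_lt_top ofReal_lt_top (finite_integral_one_add_norm hp)

lemma eLpNorm_two_restrict_le_of_norm_le_rpow_neg {F : Type*} [NormedAddCommGroup F] {k : E → F}
    {A a d : ℝ} (hA : 0 ≤ A) (hd : 0 < d) (ha : finrank ℝ E < 2 * a)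
    (hk : ∀ z, d ≤ ‖z‖ → ‖k z‖ ≤ A * ‖z‖ ^ (-a)) :
    eLpNorm k 2 (μ.restrict {z | d ≤ ‖z‖}) ≤
      ENNReal.ofReal (A * d ^ ((finrank ℝ E : ℝ) / 2 - a) * √(normRpowTail μ (2 * a)).toReal) := by
  have hpoint : ∀ z ∈ {z : E | d ≤ ‖z‖},
      ‖k z‖ₑ ^ 2 ≤ ENNReal.ofReal (A ^ 2) * ENNReal.ofReal (‖z‖ ^ (-(2 * a))) := by
    intro z (hz : d ≤ ‖z‖)
    rw [← ofReal_norm, ← ENNReal.ofReal_pow (norm_nonneg _), ← ENNReal.ofReal_mul (sq_nonneg _)]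
    refine ENNReal.ofReal_le_ofReal ?_
    calc ‖k z‖ ^ 2 ≤ (A * ‖z‖ ^ (-a)) ^ 2 := pow_le_pow_left₀ (norm_nonneg _) (hk z hz) 2
      _ = A ^ 2 * ‖z‖ ^ (-(2 * a)) := by
        rw [mul_pow, ← Real.rpow_mul_natCast (norm_nonneg _)]; congr 2; push_cast; ring
  rw [← ENNReal.pow_le_pow_left_iff two_ne_zero, sq_eLpNorm_two]
  calc ∫⁻ z in {z | d ≤ ‖z‖}, ‖k z‖ₑ ^ 2 ∂μ
      ≤ ∫⁻ z in {z | d ≤ ‖z‖}, ENNReal.ofReal (A ^ 2) * ENNReal.ofReal (‖z‖ ^ (-(2 * a))) ∂μ :=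
        setLIntegral_mono' (measurableSet_le measurable_const measurable_norm) hpoint
    _ = ENNReal.ofReal (A ^ 2) * ENNReal.ofReal (d ^ ((finrank ℝ E : ℝ) - 2 * a)) *
          ENNReal.ofReal (normRpowTail μ (2 * a)).toReal := by
        rw [lintegral_const_mul' _ _ ofReal_ne_top,
          setLIntegral_norm_rpow_neg_eq_mul_normRpowTail μ hd, ofReal_toReal (normRpowTail_lt_top μ ha).ne, mul_assoc]
    _ = ENNReal.ofReal
          (A * d ^ ((finrank ℝ E : ℝ) / 2 - a) * √(normRpowTail μ (2 * a)).toReal) ^ 2 := by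
        rw [← ENNReal.ofReal_mul (by positivity), ← ENNReal.ofReal_mul (by positivity),
          ← ENNReal.ofReal_pow (by positivity), mul_pow, mul_pow, sq_sqrt toReal_nonneg,
          ← Real.rpow_mul_natCast hd.le]
        congr 4; push_cast; ring

lemma norm_integral_comp_sub_mul_indicator_le {𝕜 : Type*} [RCLike 𝕜] {k f : E → 𝕜}
    (hk : Measurable k) {E' : Set E} (hE' : MeasurableSet E') {A a d : ℝ} (hA : 0 ≤ A)
    (hd : 0 < d) (ha : finrank ℝ E < 2 * a) (hkd : ∀ z, d ≤ ‖z‖ → ‖k z‖ ≤ A * ‖z‖ ^ (-a))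
    {x : E} (hx : ∀ y ∈ E', d ≤ ‖x - y‖) (hf : MemLp f 2 μ) :
    ‖∫ y, k (x - y) * E'.indicator f y ∂μ‖ ≤
      A * d ^ ((finrank ℝ E : ℝ) / 2 - a) * √(normRpowTail μ (2 * a)).toReal *
        (eLpNorm f 2 μ).toReal := by
  have hL2 := (eLpNorm_indicator_comp_sub_le μ hk.aestronglyMeasurable
    (measurableSet_le measurable_const measurable_norm) hx 2).trans
    (eLpNorm_two_restrict_le_of_norm_le_rpow_neg μ hA hd ha hkd)
  have hintegrand : (fun y => k (x - y) * E'.indicator f y) =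
      fun y => E'.indicator (fun y => k (x - y)) y * f y := by
    ext y
    by_cases hy : y ∈ E' <;> simp [hy]
  rw [hintegrand]
  exact norm_integral_mul_le_of_eLpNorm_le
    ((hk.comp (measurable_const_sub x)).indicator hE').aestronglyMeasurable hf (by positivity) hL2

end Tail

theorem kernel_decay_implies_offdiagonal_general (n : ℕ) (C₀ : ℝ) (hC₀ : 0 < C₀) :
    ∃ C > (0 : ℝ), ∀ s > (0 : ℝ), ∀ k : Rn n → ℂ, Measurable k →
      (∀ x : Rn n, Real.sqrt s ≤ ‖x‖ →
        ‖k x‖ ≤ C₀ * s ^ (-(n : ℝ) / 2) * ((Real.sqrt s)⁻¹ * ‖x‖) ^ (-(n : ℝ) - 1)) →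
      ∀ E E' : Set (Rn n), MeasurableSet E → MeasurableSet E' →
        ENNReal.ofReal (Real.sqrt s) ≤ setEDist E E' →
        ∀ f : Rn n → ℂ, MemLp f 2 volume →
          ∀ᵐ x ∂volume.restrict E,
            ‖∫ y : Rn n, k (x - y) * E'.indicator f y‖ ≤
              C * s ^ (-(n : ℝ) / 4) *
                ((Real.sqrt s)⁻¹ * (setEDist E E').toReal) ^ (-(n : ℝ) / 2 - 1) *
                (eLpNorm f 2 volume).toReal := by
  set T := (normRpowTail (volume : Measure (Rn n)) (2 * (n + 1))).toReal
  -- `1 + T` keeps `C` positive even if `T = 0`.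
  refine ⟨C₀ * √(1 + T), by positivity, ?_⟩
  intro s hs k hk hkbd E E' hE hE' hdist f hf
  refine ae_restrict_of_forall_mem hE fun x hx => ?_
  -- `setEDist E ∅ = ∞`, whose `toReal` is the junk value `0`.
  rcases E'.eq_empty_or_nonempty with rfl | ⟨y₀, hy₀⟩
  · simp only [Set.indicator_empty, mul_zero, integral_zero, norm_zero]
    positivity
  set d := (setEDist E E').toReal
  have hsd : √s ≤ d := le_toReal_setEDist hx hy₀ hdist
  have hd : 0 < d := (sqrt_pos.2 hs).trans_le hsd
  have hxd : ∀ y ∈ E', d ≤ ‖x - y‖ := fun y hy =>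
    (toReal_setEDist_le_dist hx hy).trans_eq (dist_eq_norm x y)
  have hdecay : ∀ z : Rn n, d ≤ ‖z‖ → ‖k z‖ ≤ C₀ * √s * ‖z‖ ^ (-((n : ℝ) + 1)) := fun z hz => by
    have h := hkbd z (hsd.trans hz)
    rwa [mul_assoc, rpow_mul_inv_sqrt_mul_rpow hs (norm_nonneg z) (by ring), ← mul_assoc,
      ← neg_add'] at h
  have hdim : finrank ℝ (Rn n) = n := finrank_euclideanSpace_fin
  calc ‖∫ y, k (x - y) * E'.indicator f y‖
      ≤ C₀ * √s * d ^ ((n : ℝ) / 2 - (n + 1)) * √T * (eLpNorm f 2 volume).toReal := by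
        simpa only [hdim] using norm_integral_comp_sub_mul_indicator_le volume hk hE'
          (by positivity) hd (by rw [hdim]; linarith) hdecay hxd hf
    _ ≤ C₀ * √s * d ^ ((n : ℝ) / 2 - (n + 1)) * √(1 + T) * (eLpNorm f 2 volume).toReal := by
        gcongr
        linarith
    _ = C₀ * √(1 + T) * s ^ (-(n : ℝ) / 4) * ((√s)⁻¹ * d) ^ (-(n : ℝ) / 2 - 1) *
          (eLpNorm f 2 volume).toReal := by
        rw [mul_assoc _ (s ^ _), rpow_mul_inv_sqrt_mul_rpow hs hd.le (by ring),
          show (n : ℝ) / 2 - (n + 1) = -(n : ℝ) / 2 - 1 by ring]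
        ring

/-- Pointwise kernel decay implies `L²`–`L^∞` off-diagonal estimates:
if `|k(x)| ≤ C₀ s^{-n/2}(s^{-1/2}|x|)^{-n-1}` for `|x| ≥ s^{1/2}`, then for Borel sets
`E, E'` with `dist(E,E') ≥ s^{1/2}` and `f ∈ L²`,
`ess sup_{x∈E} |∫ k(x-y) 1_E'(y) f(y) dy| ≤ C s^{-n/4}(s^{-1/2}dist(E,E'))^{-n/2-1}‖f‖_2`,
with `C` depending only on `n` and `C₀`. -/
theorem kernel_decay_implies_offdiagonal (n : ℕ) (hn : 1 ≤ n) (C₀ : ℝ) (hC₀ : 0 < C₀) :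
    ∃ C > (0 : ℝ), ∀ s > (0 : ℝ), ∀ k : Rn n → ℂ, Measurable k →
      (∀ x : Rn n, Real.sqrt s ≤ ‖x‖ →
        ‖k x‖ ≤ C₀ * s ^ (-(n : ℝ) / 2) * ((Real.sqrt s)⁻¹ * ‖x‖) ^ (-(n : ℝ) - 1)) →
      ∀ E E' : Set (Rn n), MeasurableSet E → MeasurableSet E' →
        ENNReal.ofReal (Real.sqrt s) ≤ setEDist E E' →
        ∀ f : Rn n → ℂ, MemLp f 2 volume →
          ∀ᵐ x ∂volume.restrict E,
            ‖∫ y : Rn n, k (x - y) * E'.indicator f y‖ ≤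
              C * s ^ (-(n : ℝ) / 4) *
                ((Real.sqrt s)⁻¹ * (setEDist E E').toReal) ^ (-(n : ℝ) / 2 - 1) *
                (eLpNorm f 2 volume).toReal :=
  kernel_decay_implies_offdiagonal_general n C₀ hC₀
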